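/- The measure M is not superadditive: for the two-qubit state σ'' = (1/4)|φ⟩⟨φ| + (3/8)(|01⟩⟨01| + |10⟩⟨10|) with |φ⟩ = (|00⟩+|11⟩)/√2, one has M_{A|B}(σ'') = 1/4 but M_{AC|BD}(σ'' ⊗ σ'') = 1/8 < 2·(1/4). -/

import Mathlib

open Matrix Kronecker Finset
open scoped ComplexOrder

attribute [local instance] Classical.propDecidable

noncomputable section

/-- nearest integer multiple of `y` to `x`, ties broken downward; `0` if `y = 0`. -/
def nim (y x : ℝ) : ℝ :=
  if y = 0 then 0
  else if x - y * ⌊x / y⌋ ≤ y * ⌈x / y⌉ - x then y * ⌊x / y⌋ else y * ⌈x / y⌉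

/-- partial trace over the second (B) factor -/
def ptraceB {α β : Type*} [Fintype α] [Fintype β]
    (ρ : Matrix (α × β) (α × β) ℂ) : Matrix α α ℂ :=
  fun a a' => ∑ b : β, ρ (a, b) (a', b)

/-- partial trace over the first (A) factor -/
def ptraceA {α β : Type*} [Fintype α] [Fintype β]
    (ρ : Matrix (α × β) (α × β) ℂ) : Matrix β β ℂ :=
  fun b b' => ∑ a : α, ρ (a, b) (a, b')

/-- the (real) eigenvalues of a Hermitian matrix, junk value `0` otherwise -/
def evalsR {n : Type*} [Fintype n] [DecidableEq n] (A : Matrix n n ℂ) : n → ℝ :=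
  if h : A.IsHermitian then h.eigenvalues else 0

/-- orthogonal projection onto the η-eigenspace of a Hermitian matrix -/
def eigProj {n : Type*} [Fintype n] [DecidableEq n] (ρ : Matrix n n ℂ) (η : ℝ) :
    Matrix n n ℂ :=
  if h : ρ.IsHermitian then
    ∑ k ∈ univ.filter (fun k => h.eigenvalues k = η),
      vecMulVec (fun i => h.eigenvectorBasis k i) (star fun i => h.eigenvectorBasis k i)
  else 0

/-- truncation of ρ down to the η-eigenspace: `η • P_η` -/
def trunc {n : Type*} [Fintype n] [DecidableEq n] (ρ : Matrix n n ℂ) (η : ℝ) :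
    Matrix n n ℂ := (η : ℂ) • eigProj ρ η

/-- dimension of the η-eigenspace -/
def dimEig {n : Type*} [Fintype n] [DecidableEq n] (ρ : Matrix n n ℂ) (η : ℝ) : ℕ :=
  if h : ρ.IsHermitian then (univ.filter (fun k => h.eigenvalues k = η)).card else 0

/-- a single term of the measure `M` -/
def Mterm (η T lam : ℝ) : ℝ := -(|lam - nim η lam| * Real.logb 2 (lam / T))

/-- the measure `M` seen from side A -/
def MmeasA {α β : Type*} [Fintype α] [Fintype β] [DecidableEq α] [DecidableEq β]
    (ρ : Matrix (α × β) (α × β) ℂ) : ℝ :=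
  ∑ η ∈ Finset.image (evalsR ρ) univ, ∑ i : α,
    Mterm η (η * (dimEig ρ η : ℝ)) (evalsR (ptraceB (trunc ρ η)) i)

/-- the measure `M` seen from side B -/
def MmeasB {α β : Type*} [Fintype α] [Fintype β] [DecidableEq α] [DecidableEq β]
    (ρ : Matrix (α × β) (α × β) ℂ) : ℝ :=
  ∑ η ∈ Finset.image (evalsR ρ) univ, ∑ i : β,
    Mterm η (η * (dimEig ρ η : ℝ)) (evalsR (ptraceA (trunc ρ η)) i)

/-- the measure `M` of nonclassical correlation -/
def Mmeas {α β : Type*} [Fintype α] [Fintype β] [DecidableEq α] [DecidableEq β]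
    (ρ : Matrix (α × β) (α × β) ℂ) : ℝ := (MmeasA ρ + MmeasB ρ) / 2

def IsDensityMatrix {n : Type*} [Fintype n] [DecidableEq n] (ρ : Matrix n n ℂ) : Prop :=
  ρ.PosSemidef ∧ ρ.trace = 1

/-- ρ admits an eigenbasis consisting of product vectors -/
def HasProductEigenbasis {α β : Type*} [Fintype α] [Fintype β] [DecidableEq α] [DecidableEq β]
    (ρ : Matrix (α × β) (α × β) ℂ) : Prop :=
  ∃ (a : α → α → ℂ) (b : β → β → ℂ) (e : α → β → ℝ),
    (∀ j j', ∑ i, star (a j i) * a j' i = if j = j' then 1 else 0) ∧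
    (∀ k k', ∑ i, star (b k i) * b k' i = if k = k' then 1 else 0) ∧
    ρ = ∑ j : α, ∑ k : β,
      (e j k : ℂ) • (vecMulVec (a j) (star (a j)) ⊗ₖ vecMulVec (b k) (star (b k)))

def ket00 : Fin 2 × Fin 2 → ℂ := fun p => if p = (0, 0) then 1 else 0
def ket01 : Fin 2 × Fin 2 → ℂ := fun p => if p = (0, 1) then 1 else 0
def ket10 : Fin 2 × Fin 2 → ℂ := fun p => if p = (1, 0) then 1 else 0
/-- `|1+⟩ = |1⟩ ⊗ (|0⟩ + |1⟩)/√2` -/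
def ket1p : Fin 2 × Fin 2 → ℂ := fun p => if p.1 = 1 then ((1 / Real.sqrt 2 : ℝ) : ℂ) else 0
/-- `|φ⟩ = (|00⟩ + |11⟩)/√2` -/
def ketBell : Fin 2 × Fin 2 → ℂ := fun p => if p.1 = p.2 then ((1 / Real.sqrt 2 : ℝ) : ℂ) else 0

/-- `ρ ⊗ σ` regarded as a bipartite state across the `AC|BD` cut -/
def regroupKron {α β γ δ : Type*}
    (ρ : Matrix (α × β) (α × β) ℂ) (σ : Matrix (γ × δ) (γ × δ) ℂ) :
    Matrix ((α × γ) × (β × δ)) ((α × γ) × (β × δ)) ℂ :=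
  fun p q => (ρ ⊗ₖ σ) ((p.1.1, p.2.1), (p.1.2, p.2.2)) ((q.1.1, q.2.1), (q.1.2, q.2.2))

/-- `σ'' = (1/4)|φ⟩⟨φ| + (3/8)(|01⟩⟨01| + |10⟩⟨10|)` with `|φ⟩ = (|00⟩+|11⟩)/√2` -/
def sigmaPP : Matrix (Fin 2 × Fin 2) (Fin 2 × Fin 2) ℂ :=
  ((1 / 4 : ℝ) : ℂ) • vecMulVec ketBell (star ketBell)
  + ((3 / 8 : ℝ) : ℂ) • (vecMulVec ket01 (star ket01) + vecMulVec ket10 (star ket10))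

/-!
Write a state as `ρ = ∑ i, e i • r i` for a complete family `r` of mutually orthogonal
projections. Then `r i` kills every eigenvector of `ρ` whose eigenvalue is not `e i`, so the
spectrum of `ρ` is the range of `e` and its eigenprojections are the sums of the `r i` sharing a
value, whichever eigenbasis `Matrix.IsHermitian.eigenvectorBasis` picks. If each `r i` also has a
scalar marginal `c i • 1`, so has every truncation, and `M` becomes an explicit finite sum.
For `σ''` take `r = (|φ⁻⟩⟨φ⁻|, |φ⟩⟨φ|, |01⟩⟨01| + |10⟩⟨10|)`, with marginals `1/2, 1/2, 1`, and for
`σ'' ⊗ σ''` their pairwise products. Only the eigenvalue `1/4` of `σ''`, resp. `1/16` of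
`σ'' ⊗ σ''`, contributes: for every other eigenvalue the marginal eigenvalue is `0` or the
eigenvalue itself, which `nim` leaves unchanged.
-/

theorem Matrix.IsHermitian.sum_vecMulVec_eigenvectorBasis {n : Type*} [Fintype n] [DecidableEq n]
    {A : Matrix n n ℂ} (hA : A.IsHermitian) :
    ∑ k, vecMulVec ⇑(hA.eigenvectorBasis k) (star ⇑(hA.eigenvectorBasis k)) = 1 := by
  rw [ext_iff_mulVec]
  intro x
  have := congrArg WithLp.ofLp (hA.eigenvectorBasis.sum_repr' (WithLp.toLp 2 x))
  simpa [sum_mulVec, vecMulVec_mulVec, EuclideanSpace.inner_eq_star_dotProduct, dotProduct_comm]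
    using this

structure IsResolutionOfIdentity {n ι : Type*} [Fintype n] [DecidableEq n] [Fintype ι]
    (r : ι → Matrix n n ℂ) : Prop where
  isHermitian : ∀ i, (r i).IsHermitian
  mul_eq : ∀ i j, r i * r j = if i = j then r i else 0
  sum_eq_one : ∑ i, r i = 1
  ne_zero : ∀ i, r i ≠ 0

namespace IsResolutionOfIdentity

variable {n ι : Type*} [Fintype n] [DecidableEq n] [Fintype ι]
  {r : ι → Matrix n n ℂ} (hr : IsResolutionOfIdentity r) (e : ι → ℝ)
include hr

theorem isHermitian_sum_smul : (∑ i, (e i : ℂ) • r i).IsHermitian :=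
  (isSelfAdjoint_sum _ fun i _ =>
    ((hr.isHermitian i).smul (Complex.conj_ofReal (e i))).isSelfAdjoint).isHermitian

theorem mul_sum_smul (i : ι) : r i * ∑ j, (e j : ℂ) • r j = (e i : ℂ) • r i := by
  simp [Finset.mul_sum, hr.mul_eq]

theorem mulVec_eigenvectorBasis_eq_zero (h : (∑ j, (e j : ℂ) • r j).IsHermitian) {i : ι} {k : n}
    (hik : e i ≠ h.eigenvalues k) : r i *ᵥ ⇑(h.eigenvectorBasis k) = 0 := by
  have key : (e i : ℂ) • (r i *ᵥ ⇑(h.eigenvectorBasis k))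
      = (h.eigenvalues k : ℂ) • (r i *ᵥ ⇑(h.eigenvectorBasis k)) := by
    rw [← smul_mulVec, ← hr.mul_sum_smul e, ← mulVec_mulVec, h.mulVec_eigenvectorBasis,
      mulVec_smul, Complex.coe_smul]
  rw [← sub_eq_zero, ← sub_smul] at key
  exact (smul_eq_zero.mp key).resolve_left (sub_ne_zero.mpr (by exact_mod_cast hik))

theorem sum_mulVec_eigenvectorBasis (h : (∑ j, (e j : ℂ) • r j).IsHermitian) (k : n) :
    ∑ i with e i = h.eigenvalues k, r i *ᵥ ⇑(h.eigenvectorBasis k) = ⇑(h.eigenvectorBasis k) := by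
  conv_rhs => rw [← one_mulVec ⇑(h.eigenvectorBasis k), ← hr.sum_eq_one, sum_mulVec]
  rw [Finset.sum_filter_of_ne]
  intro i _ hne
  by_contra hik
  exact hne (hr.mulVec_eigenvectorBasis_eq_zero e h hik)

theorem sum_fiber_mulVec_eigenvectorBasis (h : (∑ j, (e j : ℂ) • r j).IsHermitian) (η : ℝ) (k : n) :
    (∑ i with e i = η, r i) *ᵥ ⇑(h.eigenvectorBasis k)
      = if h.eigenvalues k = η then ⇑(h.eigenvectorBasis k) else 0 := by
  rw [sum_mulVec]
  split_ifs with hk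
  · rw [← hk, hr.sum_mulVec_eigenvectorBasis]
  · exact Finset.sum_eq_zero fun i hi =>
      hr.mulVec_eigenvectorBasis_eq_zero e h fun he => hk ((Finset.mem_filter.mp hi).2 ▸ he).symm

theorem eigenvalues_mem_range (h : (∑ j, (e j : ℂ) • r j).IsHermitian) (k : n) :
    h.eigenvalues k ∈ Set.range e := by
  by_contra hk
  have hzero := hr.sum_mulVec_eigenvectorBasis e h k
  rw [Finset.filter_false_of_mem fun i _ hi => hk ⟨i, hi⟩, Finset.sum_empty] at hzero
  exact h.eigenvectorBasis.orthonormal.ne_zero k (by ext; simp [← hzero])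

theorem eigProj_sum_smul (η : ℝ) :
    eigProj (∑ j, (e j : ℂ) • r j) η = ∑ i with e i = η, r i := by
  have h := hr.isHermitian_sum_smul e
  rw [eigProj, dif_pos h]
  conv_rhs => rw [← mul_one (∑ i with e i = η, r i), ← h.sum_vecMulVec_eigenvectorBasis,
    Finset.mul_sum]
  simp_rw [mul_vecMulVec, hr.sum_fiber_mulVec_eigenvectorBasis e h, Finset.sum_filter]
  exact Finset.sum_congr rfl fun k _ => by split_ifs <;> simp

theorem mul_sum_fiber (i : ι) : r i * ∑ j with e j = e i, r j = r i := by
  rw [Finset.mul_sum, Finset.sum_eq_single_of_mem i (by simp)]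
  · simp [hr.mul_eq]
  · intro j _ hji
    simp [hr.mul_eq, hji.symm]

theorem image_evalsR_sum_smul :
    univ.image (evalsR (∑ j, (e j : ℂ) • r j)) = univ.image e := by
  have h := hr.isHermitian_sum_smul e
  ext η
  simp only [Finset.mem_image, Finset.mem_univ, true_and, evalsR, dif_pos h]
  constructor
  · rintro ⟨k, rfl⟩
    exact hr.eigenvalues_mem_range e h k
  · rintro ⟨i, rfl⟩
    by_contra hi
    have hzero := hr.eigProj_sum_smul e (e i)
    rw [eigProj, dif_pos h, Finset.filter_false_of_mem fun k _ hk => hi ⟨k, hk⟩,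
      Finset.sum_empty] at hzero
    apply hr.ne_zero i
    rw [← hr.mul_sum_fiber e i, ← hzero, mul_zero]

theorem dimEig_sum_smul (η : ℝ) :
    (dimEig (∑ j, (e j : ℂ) • r j) η : ℂ) = ∑ i with e i = η, (r i).trace := by
  have h := hr.isHermitian_sum_smul e
  rw [← trace_sum, ← hr.eigProj_sum_smul e, eigProj, dimEig, dif_pos h, dif_pos h, trace_sum,
    Finset.card_eq_sum_ones, Nat.cast_sum]
  refine Finset.sum_congr rfl fun k _ => ?_
  have hk := orthonormal_iff_ite.mp h.eigenvectorBasis.orthonormal k k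
  rw [if_pos rfl, EuclideanSpace.inner_eq_star_dotProduct] at hk
  rw [trace_vecMulVec, hk, Nat.cast_one]

end IsResolutionOfIdentity

theorem evalsR_smul_one {n : Type*} [Fintype n] [DecidableEq n] [Nonempty n] (c : ℝ) (i : n) :
    evalsR ((c : ℂ) • (1 : Matrix n n ℂ)) i = c := by
  have hr : IsResolutionOfIdentity fun _ : Unit => (1 : Matrix n n ℂ) :=
    ⟨fun _ => isHermitian_one, fun _ _ => by simp, by simp, fun _ => one_ne_zero⟩
  have himage := hr.image_evalsR_sum_smul fun _ => c
  simp only [Finset.univ_unique, Finset.sum_singleton, Finset.image_singleton] at himage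
  simpa using himage.subset (Finset.mem_image_of_mem _ (Finset.mem_univ i))

theorem nim_eq_zero_of_le_half {η lam : ℝ} (hlam : 0 ≤ lam) (hle : lam ≤ η / 2) :
    nim η lam = 0 := by
  rcases eq_or_ne η 0 with rfl | hη
  · simp [nim]
  have hηpos : 0 < η := lt_of_le_of_ne (by linarith) (Ne.symm hη)
  have hfloor : ⌊lam / η⌋ = 0 := Int.floor_eq_zero_iff.mpr
    ⟨div_nonneg hlam hηpos.le, (div_lt_one hηpos).mpr (by linarith)⟩
  have hround : lam ≤ η * ⌈lam / η⌉ - lam := by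
    rcases hlam.eq_or_lt with rfl | hpos
    · simp
    · have hceil : ⌈lam / η⌉ = 1 := Int.ceil_eq_iff.mpr
        ⟨by norm_num; positivity, by exact_mod_cast (div_le_one hηpos).mpr (by linarith : lam ≤ η)⟩
      rw [hceil]
      push_cast
      linarith
  simp [nim, hη, hfloor, hround]

theorem Mterm_of_le_half {η T lam : ℝ} (hlam : 0 ≤ lam) (hle : lam ≤ η / 2) :
    Mterm η T lam = -(lam * Real.logb 2 (lam / T)) := by
  rw [Mterm, nim_eq_zero_of_le_half hlam hle, sub_zero, abs_of_nonneg hlam]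

theorem Mterm_self (η T : ℝ) : Mterm η T η = 0 := by
  rcases eq_or_ne η 0 with rfl | hη <;> simp [Mterm, nim, *]

theorem Mterm_zero_right (η T : ℝ) : Mterm η T 0 = 0 := by
  simp [Mterm, nim]

section PartialTrace

variable {α β : Type*} [Fintype α] [Fintype β]

def ptraceBLinearMap : Matrix (α × β) (α × β) ℂ →ₗ[ℂ] Matrix α α ℂ where
  toFun := ptraceB
  map_add' A B := by ext; simp [ptraceB, Finset.sum_add_distrib]
  map_smul' c A := by ext; simp [ptraceB, Finset.mul_sum]

def ptraceALinearMap : Matrix (α × β) (α × β) ℂ →ₗ[ℂ] Matrix β β ℂ where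
  toFun := ptraceA
  map_add' A B := by ext; simp [ptraceA, Finset.sum_add_distrib]
  map_smul' c A := by ext; simp [ptraceA, Finset.mul_sum]

end PartialTrace

section ScalarMarginals

variable {n ι γ : Type*} [Fintype n] [DecidableEq n] [Fintype ι] [Fintype γ] [DecidableEq γ]
  [Nonempty γ] {r : ι → Matrix n n ℂ} (e c d : ι → ℝ)

theorem sum_Mterm_of_map_eq_smul_one (hr : IsResolutionOfIdentity r)
    (Φ : Matrix n n ℂ →ₗ[ℂ] Matrix γ γ ℂ) (hc : ∀ i, Φ (r i) = (c i : ℂ) • 1)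
    (hd : ∀ i, (r i).trace = d i) (η : ℝ) :
    ∑ x : γ, Mterm η (η * dimEig (∑ j, (e j : ℂ) • r j) η)
        (evalsR (Φ (trunc (∑ j, (e j : ℂ) • r j) η)) x)
      = Fintype.card γ * Mterm η (η * ∑ i with e i = η, d i) (η * ∑ i with e i = η, c i) := by
  have hdim : (dimEig (∑ j, (e j : ℂ) • r j) η : ℝ) = ∑ i with e i = η, d i := by
    have := hr.dimEig_sum_smul e η
    simp only [hd] at this
    exact_mod_cast this
  have hΦ : Φ (trunc (∑ j, (e j : ℂ) • r j) η) = ((η * ∑ i with e i = η, c i : ℝ) : ℂ) • 1 := by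
    rw [trunc, hr.eigProj_sum_smul, map_smul, map_sum, Finset.sum_congr rfl fun i _ => hc i,
      ← Finset.sum_smul, smul_smul]
    push_cast
    rfl
  simp only [hdim, hΦ, evalsR_smul_one, Finset.sum_const, Finset.card_univ, nsmul_eq_mul]

end ScalarMarginals

section Bipartite

variable {α β ι : Type*} [Fintype α] [Fintype β] [DecidableEq α] [DecidableEq β] [Fintype ι]
  {r : ι → Matrix (α × β) (α × β) ℂ} (e c d : ι → ℝ)

theorem MmeasA_sum_smul [Nonempty α] (hr : IsResolutionOfIdentity r)
    (hc : ∀ i, ptraceB (r i) = (c i : ℂ) • 1) (hd : ∀ i, (r i).trace = d i) :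
    MmeasA (∑ i, (e i : ℂ) • r i) = Fintype.card α *
      ∑ η ∈ univ.image e, Mterm η (η * ∑ i with e i = η, d i) (η * ∑ i with e i = η, c i) := by
  rw [MmeasA, hr.image_evalsR_sum_smul, Finset.mul_sum]
  exact Finset.sum_congr rfl fun η _ =>
    sum_Mterm_of_map_eq_smul_one e c d hr ptraceBLinearMap hc hd η

theorem MmeasB_sum_smul [Nonempty β] (hr : IsResolutionOfIdentity r)
    (hc : ∀ i, ptraceA (r i) = (c i : ℂ) • 1) (hd : ∀ i, (r i).trace = d i) :
    MmeasB (∑ i, (e i : ℂ) • r i) = Fintype.card β *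
      ∑ η ∈ univ.image e, Mterm η (η * ∑ i with e i = η, d i) (η * ∑ i with e i = η, c i) := by
  rw [MmeasB, hr.image_evalsR_sum_smul, Finset.mul_sum]
  exact Finset.sum_congr rfl fun η _ =>
    sum_Mterm_of_map_eq_smul_one e c d hr ptraceALinearMap hc hd η

end Bipartite

section RegroupKron

variable {α β γ δ : Type*}

theorem regroupKron_eq_submatrix (A : Matrix (α × β) (α × β) ℂ) (B : Matrix (γ × δ) (γ × δ) ℂ) :
    regroupKron A B = (A ⊗ₖ B).submatrix (Equiv.prodProdProdComm α γ β δ)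
      (Equiv.prodProdProdComm α γ β δ) := rfl

theorem conjTranspose_regroupKron (A : Matrix (α × β) (α × β) ℂ)
    (B : Matrix (γ × δ) (γ × δ) ℂ) : (regroupKron A B)ᴴ = regroupKron Aᴴ Bᴴ := by
  simp only [regroupKron_eq_submatrix, conjTranspose_submatrix, conjTranspose_kronecker]

theorem regroupKron_sum_smul_sum_smul {ι κ : Type*} [Fintype ι] [Fintype κ]
    (a : ι → ℂ) (A : ι → Matrix (α × β) (α × β) ℂ) (b : κ → ℂ)
    (B : κ → Matrix (γ × δ) (γ × δ) ℂ) :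
    regroupKron (∑ i, a i • A i) (∑ j, b j • B j)
      = ∑ ij : ι × κ, (a ij.1 * b ij.2) • regroupKron (A ij.1) (B ij.2) := by
  ext p q
  simp [regroupKron, Matrix.sum_apply, Finset.sum_mul_sum, Fintype.sum_prod_type,
    mul_mul_mul_comm]

theorem regroupKron_ne_zero {A : Matrix (α × β) (α × β) ℂ} {B : Matrix (γ × δ) (γ × δ) ℂ}
    (hA : A ≠ 0) (hB : B ≠ 0) : regroupKron A B ≠ 0 := by
  obtain ⟨p, p', hp⟩ : ∃ p p', A p p' ≠ 0 := by
    by_contra! h; exact hA (Matrix.ext h)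
  obtain ⟨q, q', hq⟩ : ∃ q q', B q q' ≠ 0 := by
    by_contra! h; exact hB (Matrix.ext h)
  intro h
  have := congrFun (congrFun h ((p.1, q.1), (p.2, q.2))) ((p'.1, q'.1), (p'.2, q'.2))
  simp [regroupKron, hp, hq] at this

theorem regroupKron_one [DecidableEq α] [DecidableEq β] [DecidableEq γ] [DecidableEq δ] :
    regroupKron (1 : Matrix (α × β) (α × β) ℂ) (1 : Matrix (γ × δ) (γ × δ) ℂ) = 1 := by
  rw [regroupKron_eq_submatrix, one_kronecker_one, submatrix_one_equiv]

variable [Fintype α] [Fintype β] [Fintype γ] [Fintype δ]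

theorem regroupKron_mul_regroupKron (A C : Matrix (α × β) (α × β) ℂ)
    (B D : Matrix (γ × δ) (γ × δ) ℂ) :
    regroupKron A B * regroupKron C D = regroupKron (A * C) (B * D) := by
  simp only [regroupKron_eq_submatrix, submatrix_mul_equiv, mul_kronecker_mul]

theorem trace_regroupKron (A : Matrix (α × β) (α × β) ℂ) (B : Matrix (γ × δ) (γ × δ) ℂ) :
    (regroupKron A B).trace = A.trace * B.trace := by
  rw [← trace_kronecker, regroupKron_eq_submatrix]
  exact Fintype.sum_equiv (Equiv.prodProdProdComm α γ β δ) _ _ fun _ => rfl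

theorem ptraceB_regroupKron (A : Matrix (α × β) (α × β) ℂ) (B : Matrix (γ × δ) (γ × δ) ℂ) :
    ptraceB (regroupKron A B) = ptraceB A ⊗ₖ ptraceB B := by
  ext ⟨a, c⟩ ⟨a', c'⟩
  simp only [ptraceB, regroupKron, kroneckerMap_apply, Fintype.sum_prod_type, Finset.sum_mul_sum]

theorem smul_one_kronecker_smul_one {m n : Type*} [DecidableEq m] [DecidableEq n] (a b : ℂ) :
    (a • (1 : Matrix m m ℂ)) ⊗ₖ (b • (1 : Matrix n n ℂ)) = (a * b) • 1 := by
  rw [smul_kronecker, kronecker_smul, one_kronecker_one, smul_smul]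

theorem ptraceA_regroupKron (A : Matrix (α × β) (α × β) ℂ) (B : Matrix (γ × δ) (γ × δ) ℂ) :
    ptraceA (regroupKron A B) = ptraceA A ⊗ₖ ptraceA B := by
  ext ⟨b, d⟩ ⟨b', d'⟩
  simp only [ptraceA, regroupKron, kroneckerMap_apply, Fintype.sum_prod_type, Finset.sum_mul_sum]

end RegroupKron

theorem IsResolutionOfIdentity.regroupKron {α β γ δ ι κ : Type*} [Fintype α] [Fintype β]
    [Fintype γ] [Fintype δ] [DecidableEq α] [DecidableEq β] [DecidableEq γ] [DecidableEq δ]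
    [Fintype ι] [Fintype κ] {r : ι → Matrix (α × β) (α × β) ℂ} {s : κ → Matrix (γ × δ) (γ × δ) ℂ}
    (hr : IsResolutionOfIdentity r) (hs : IsResolutionOfIdentity s) :
    IsResolutionOfIdentity fun ij : ι × κ => regroupKron (r ij.1) (s ij.2) where
  isHermitian ij := by
    rw [IsHermitian, conjTranspose_regroupKron, hr.isHermitian, hs.isHermitian]
  mul_eq ij kl := by
    rw [regroupKron_mul_regroupKron, hr.mul_eq, hs.mul_eq]
    by_cases h1 : ij.1 = kl.1 <;> by_cases h2 : ij.2 = kl.2 <;>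
      simp [h1, h2, Prod.ext_iff, regroupKron_eq_submatrix]
  sum_eq_one := by
    have := regroupKron_sum_smul_sum_smul (fun _ => 1) r (fun _ => 1) s
    simp only [one_smul, mul_one, hr.sum_eq_one, hs.sum_eq_one, regroupKron_one] at this
    exact this.symm
  ne_zero ij := regroupKron_ne_zero (hr.ne_zero ij.1) (hs.ne_zero ij.2)

/-- `|φ⁻⟩ = (|00⟩ - |11⟩)/√2` spans the kernel of `σ''`. -/
def ketPhiMinus : Fin 2 × Fin 2 → ℂ := fun p =>
  if p = (0, 0) then ((1 / Real.sqrt 2 : ℝ) : ℂ)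
  else if p = (1, 1) then -((1 / Real.sqrt 2 : ℝ) : ℂ) else 0

def sigmaPPProj : Fin 3 → Matrix (Fin 2 × Fin 2) (Fin 2 × Fin 2) ℂ :=
  ![vecMulVec ketPhiMinus (star ketPhiMinus), vecMulVec ketBell (star ketBell),
    vecMulVec ket01 (star ket01) + vecMulVec ket10 (star ket10)]

def sigmaPPEigenvalue : Fin 3 → ℝ := ![0, 1 / 4, 3 / 8]

def sigmaPPProjRank : Fin 3 → ℝ := ![1, 1, 2]

def sigmaPPProjMarginal : Fin 3 → ℝ := ![1 / 2, 1 / 2, 1]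

theorem inv_sqrt_two_mul_self : ((Real.sqrt 2 : ℂ))⁻¹ * ((Real.sqrt 2 : ℂ))⁻¹ = 2⁻¹ := by
  rw [← mul_inv, ← Complex.ofReal_mul, Real.mul_self_sqrt zero_le_two]
  norm_num

theorem sigmaPP_eq_sum : sigmaPP = ∑ i, (sigmaPPEigenvalue i : ℂ) • sigmaPPProj i := by
  rw [Fin.sum_univ_three]
  simp only [sigmaPPEigenvalue, sigmaPPProj, Matrix.cons_val_zero, Matrix.cons_val_one,
    Matrix.cons_val_two, Matrix.head_cons, Matrix.tail_cons, Complex.ofReal_zero, zero_smul,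
    zero_add]
  rfl

theorem trace_sigmaPPProj (i : Fin 3) : (sigmaPPProj i).trace = sigmaPPProjRank i := by
  fin_cases i <;>
    simp [sigmaPPProj, sigmaPPProjRank, trace_add, dotProduct, Fintype.sum_prod_type,
      ketPhiMinus, ketBell, ket01, ket10, inv_sqrt_two_mul_self] <;> norm_num

theorem ptraceB_sigmaPPProj (i : Fin 3) :
    ptraceB (sigmaPPProj i) = (sigmaPPProjMarginal i : ℂ) • 1 := by
  ext a a'
  fin_cases i <;> fin_cases a <;> fin_cases a' <;>
    simp [ptraceB, sigmaPPProj, sigmaPPProjMarginal, vecMulVec, ketPhiMinus, ketBell, ket01,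
      ket10, inv_sqrt_two_mul_self, one_apply]

theorem ptraceA_sigmaPPProj (i : Fin 3) :
    ptraceA (sigmaPPProj i) = (sigmaPPProjMarginal i : ℂ) • 1 := by
  ext a a'
  fin_cases i <;> fin_cases a <;> fin_cases a' <;>
    simp [ptraceA, sigmaPPProj, sigmaPPProjMarginal, vecMulVec, ketPhiMinus, ketBell, ket01,
      ket10, inv_sqrt_two_mul_self, one_apply]

theorem isResolutionOfIdentity_sigmaPPProj : IsResolutionOfIdentity sigmaPPProj where
  isHermitian i := by
    fin_cases i
    · exact (posSemidef_vecMulVec_self_star _).isHermitian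
    · exact (posSemidef_vecMulVec_self_star _).isHermitian
    · exact (posSemidef_vecMulVec_self_star _).isHermitian.add
        (posSemidef_vecMulVec_self_star _).isHermitian
  mul_eq i j := by
    fin_cases i <;> fin_cases j <;>
      simp [sigmaPPProj, add_mul, mul_add, vecMulVec_mul_vecMulVec, dotProduct,
        Fintype.sum_prod_type, ketPhiMinus, ketBell, ket01, ket10, inv_sqrt_two_mul_self]
    norm_num
  sum_eq_one := by
    ext ⟨a, b⟩ ⟨c, d⟩
    fin_cases a <;> fin_cases b <;> fin_cases c <;> fin_cases d <;>
      simp [sigmaPPProj, Fin.sum_univ_three, vecMulVec, ketPhiMinus, ketBell, ket01, ket10,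
        inv_sqrt_two_mul_self, one_apply] <;> norm_num
  ne_zero i h := by
    have htr := trace_sigmaPPProj i
    rw [h, trace_zero] at htr
    fin_cases i <;> norm_num [sigmaPPProjRank] at htr

theorem image_sigmaPPEigenvalue : univ.image sigmaPPEigenvalue = {0, 1 / 4, 3 / 8} := by
  ext x
  simp [sigmaPPEigenvalue, Fin.exists_fin_succ, eq_comm]

theorem sum_Mterm_sigmaPP :
    ∑ η ∈ univ.image sigmaPPEigenvalue,
      Mterm η (η * ∑ i with sigmaPPEigenvalue i = η, sigmaPPProjRank i)
        (η * ∑ i with sigmaPPEigenvalue i = η, sigmaPPProjMarginal i) = 1 / 8 := by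
  rw [image_sigmaPPEigenvalue, sum_insert (by norm_num), sum_insert (by norm_num), sum_singleton]
  simp only [Finset.sum_filter, Fin.sum_univ_three]
  norm_num [sigmaPPEigenvalue, sigmaPPProjRank, sigmaPPProjMarginal, Matrix.cons_val_two,
    Matrix.tail_cons, Matrix.head_cons]
  rw [Mterm_zero_right, Mterm_self, Mterm_of_le_half (by norm_num) (by norm_num),
    show (1 / 8 : ℝ) / (1 / 4) = 2 ^ (-1 : ℝ) by norm_num [Real.rpow_neg_one],
    Real.logb_rpow two_pos (by norm_num)]
  norm_num

theorem MmeasA_sigmaPP : MmeasA sigmaPP = 1 / 4 := by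
  rw [sigmaPP_eq_sum, MmeasA_sum_smul _ _ _ isResolutionOfIdentity_sigmaPPProj ptraceB_sigmaPPProj
    trace_sigmaPPProj, sum_Mterm_sigmaPP]
  norm_num

theorem MmeasB_sigmaPP : MmeasB sigmaPP = 1 / 4 := by
  rw [sigmaPP_eq_sum, MmeasB_sum_smul _ _ _ isResolutionOfIdentity_sigmaPPProj ptraceA_sigmaPPProj
    trace_sigmaPPProj, sum_Mterm_sigmaPP]
  norm_num

theorem regroupKron_sigmaPP_eq_sum :
    regroupKron sigmaPP sigmaPP = ∑ ij : Fin 3 × Fin 3,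
      ((sigmaPPEigenvalue ij.1 * sigmaPPEigenvalue ij.2 : ℝ) : ℂ) •
        regroupKron (sigmaPPProj ij.1) (sigmaPPProj ij.2) := by
  rw [sigmaPP_eq_sum, regroupKron_sum_smul_sum_smul]
  push_cast
  rfl

theorem trace_regroupKron_sigmaPPProj (ij : Fin 3 × Fin 3) :
    (regroupKron (sigmaPPProj ij.1) (sigmaPPProj ij.2)).trace
      = (sigmaPPProjRank ij.1 * sigmaPPProjRank ij.2 : ℝ) := by
  rw [trace_regroupKron, trace_sigmaPPProj, trace_sigmaPPProj, Complex.ofReal_mul]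

theorem ptraceB_regroupKron_sigmaPPProj (ij : Fin 3 × Fin 3) :
    ptraceB (regroupKron (sigmaPPProj ij.1) (sigmaPPProj ij.2))
      = ((sigmaPPProjMarginal ij.1 * sigmaPPProjMarginal ij.2 : ℝ) : ℂ) • 1 := by
  rw [ptraceB_regroupKron, ptraceB_sigmaPPProj, ptraceB_sigmaPPProj, smul_one_kronecker_smul_one,
    Complex.ofReal_mul]

theorem ptraceA_regroupKron_sigmaPPProj (ij : Fin 3 × Fin 3) :
    ptraceA (regroupKron (sigmaPPProj ij.1) (sigmaPPProj ij.2))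
      = ((sigmaPPProjMarginal ij.1 * sigmaPPProjMarginal ij.2 : ℝ) : ℂ) • 1 := by
  rw [ptraceA_regroupKron, ptraceA_sigmaPPProj, ptraceA_sigmaPPProj, smul_one_kronecker_smul_one,
    Complex.ofReal_mul]

theorem image_sigmaPPEigenvalue_mul :
    univ.image (fun ij : Fin 3 × Fin 3 => sigmaPPEigenvalue ij.1 * sigmaPPEigenvalue ij.2)
      = {0, 1 / 16, 3 / 32, 9 / 64} := by
  ext x
  simp [sigmaPPEigenvalue, Fin.exists_fin_succ, eq_comm]
  norm_num
  tauto

theorem sum_Mterm_sigmaPP_sq :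
    ∑ η ∈ univ.image (fun ij : Fin 3 × Fin 3 => sigmaPPEigenvalue ij.1 * sigmaPPEigenvalue ij.2),
      Mterm η (η * ∑ ij : Fin 3 × Fin 3 with sigmaPPEigenvalue ij.1 * sigmaPPEigenvalue ij.2 = η,
          sigmaPPProjRank ij.1 * sigmaPPProjRank ij.2)
        (η * ∑ ij : Fin 3 × Fin 3 with sigmaPPEigenvalue ij.1 * sigmaPPEigenvalue ij.2 = η,
          sigmaPPProjMarginal ij.1 * sigmaPPProjMarginal ij.2) = 1 / 32 := by
  rw [image_sigmaPPEigenvalue_mul, sum_insert (by norm_num), sum_insert (by norm_num),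
    sum_insert (by norm_num), sum_singleton]
  simp only [Finset.sum_filter, Fintype.sum_prod_type, Fin.sum_univ_three]
  norm_num [sigmaPPEigenvalue, sigmaPPProjRank, sigmaPPProjMarginal, Matrix.cons_val_two,
    Matrix.tail_cons, Matrix.head_cons]
  rw [Mterm_zero_right, Mterm_self, Mterm_self, Mterm_of_le_half (by norm_num) (by norm_num),
    show (1 / 64 : ℝ) / (1 / 16) = 2 ^ (-2 : ℝ) by norm_num [Real.rpow_neg],
    Real.logb_rpow two_pos (by norm_num)]
  norm_num

theorem MmeasA_regroupKron_sigmaPP : MmeasA (regroupKron sigmaPP sigmaPP) = 1 / 8 := by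
  rw [regroupKron_sigmaPP_eq_sum, MmeasA_sum_smul _ _ _
    (isResolutionOfIdentity_sigmaPPProj.regroupKron isResolutionOfIdentity_sigmaPPProj)
    ptraceB_regroupKron_sigmaPPProj trace_regroupKron_sigmaPPProj, sum_Mterm_sigmaPP_sq]
  norm_num

theorem MmeasB_regroupKron_sigmaPP : MmeasB (regroupKron sigmaPP sigmaPP) = 1 / 8 := by
  rw [regroupKron_sigmaPP_eq_sum, MmeasB_sum_smul _ _ _
    (isResolutionOfIdentity_sigmaPPProj.regroupKron isResolutionOfIdentity_sigmaPPProj)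
    ptraceA_regroupKron_sigmaPPProj trace_regroupKron_sigmaPPProj, sum_Mterm_sigmaPP_sq]
  norm_num

/-- `M` is not superadditive: `M_{A|B}(σ'') = 1/4` but
`M_{AC|BD}(σ'' ⊗ σ'') = 1/8 < 2 · (1/4)`. -/
theorem Mmeas_not_superadditive :
    Mmeas sigmaPP = 1 / 4 ∧
    Mmeas (regroupKron sigmaPP sigmaPP) = 1 / 8 ∧
    Mmeas (regroupKron sigmaPP sigmaPP) < Mmeas sigmaPP + Mmeas sigmaPP := by
  have hσ : Mmeas sigmaPP = 1 / 4 := by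
    rw [Mmeas, MmeasA_sigmaPP, MmeasB_sigmaPP]
    norm_num
  have hσσ : Mmeas (regroupKron sigmaPP sigmaPP) = 1 / 8 := by
    rw [Mmeas, MmeasA_regroupKron_sigmaPP, MmeasB_regroupKron_sigmaPP]
    norm_num
  refine ⟨hσ, hσσ, ?_⟩
  rw [hσ, hσσ]
  norm_num

end
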